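/- Let T ∈ ℝ, J = [T,∞), and let u : J × ℝ → ℝ be continuous with u(t,·) ∈ L²(ℝ) for every t ∈ J and sup_{t ∈ J} ‖u(t)‖_{L²} < ∞. Let m, m̃ : J → ℝ satisfy m(t) ≤ m̃(t) ≤ m(t) + 1 for all t ∈ J, and assume the non-dispersion property: for every ε > 0 there exists R_ε > 0 with ∫_{x < m(t) − R_ε} u²(t,x) dx ≤ ε for all t ∈ J. Let f : ℝ → ℝ be an increasing affine function, κ > 0, φ(x) := 1/2 − (1/π) arctan(e^{κx}), and for t₀ ∈ J, x₀ ∈ ℝ define I_{(t₀,x₀)}(t) := ∫_ℝ u²(t, x + m̃(t)) φ(x − x₀ + f(t) − f(t₀)) dx. Then for each fixed x₀ ∈ ℝ and t₀ ∈ J, I_{(t₀,x₀)}(t) → 0 as t → +∞. -/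

import Mathlib

/-!
After the change of variables `y = x + m̃(t)` the localized mass is
`∫ u²(t, y) φ(y - a(t)) dy` with `a(t) = m̃(t) + x₀ - f(t) + f(t₀)`, and `a(t) - m(t) → -∞`
because `f` increases without bound. Split the integral at `a(t) + c`, where `φ ≤ δ` on
`[c, ∞)`: to the left, `φ ≤ 1` and the mass of `u²(t)` there is small by non-dispersion;
to the right, the integral is at most `δ sup_t ‖u(t)‖²`.
-/

open MeasureTheory Real Filter Set

noncomputable section

def arctanExpProfile (κ x : ℝ) : ℝ := 1 / 2 - 1 / π * arctan (exp (κ * x))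

lemma arctanExpProfile_nonneg (κ x : ℝ) : 0 ≤ arctanExpProfile κ x := by
  have h : 1 / π * arctan (exp (κ * x)) ≤ 1 / π * (π / 2) :=
    mul_le_mul_of_nonneg_left (arctan_lt_pi_div_two _).le (by positivity)
  have hπ : 1 / π * (π / 2) = 1 / 2 := by field_simp
  unfold arctanExpProfile
  linarith

lemma arctanExpProfile_le_one (κ x : ℝ) : arctanExpProfile κ x ≤ 1 := by
  have h : 0 ≤ arctan (exp (κ * x)) := arctan_nonneg.mpr (exp_pos _).le
  have : 0 ≤ 1 / π * arctan (exp (κ * x)) := by positivity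
  unfold arctanExpProfile
  linarith

lemma continuous_arctanExpProfile (κ : ℝ) : Continuous (arctanExpProfile κ) := by
  unfold arctanExpProfile
  fun_prop

lemma tendsto_arctanExpProfile_atTop {κ : ℝ} (hκ : 0 < κ) :
    Tendsto (arctanExpProfile κ) atTop (nhds 0) := by
  have h : Tendsto (fun x => arctan (exp (κ * x))) atTop (nhds (π / 2)) :=
    (tendsto_arctan_atTop.mono_right nhdsWithin_le_nhds).comp
      (tendsto_exp_atTop.comp (tendsto_id.const_mul_atTop hκ))
  have hlim : (1 : ℝ) / 2 - 1 / π * (π / 2) = 0 := by field_simp; ring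
  have := (tendsto_const_nhds (x := (1 : ℝ) / 2)).sub ((tendsto_const_nhds (x := 1 / π)).mul h)
  rwa [hlim] at this

lemma integral_mul_shift_le {g w : ℝ → ℝ} {a c δ : ℝ} (hg : Integrable g) (hg0 : 0 ≤ g)
    (hw : Measurable w) (hw0 : 0 ≤ w) (hw1 : ∀ x, w x ≤ 1) (hwδ : ∀ x ≥ c, w x ≤ δ) :
    ∫ x, g x * w (x - a) ≤ (∫ x in Iio (a + c), g x) + δ * ∫ x, g x := by
  have hδ : 0 ≤ δ := (hw0 c).trans (hwδ c le_rfl)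
  have hgw : Integrable fun x => g x * w (x - a) :=
    hg.mul_bdd (hw.comp (measurable_id.sub_const a)).aestronglyMeasurable
      (c := 1) (.of_forall fun x => by rw [norm_of_nonneg (hw0 _)]; exact hw1 _)
  have hpt : ∀ x, g x * w (x - a) ≤ (Iio (a + c)).indicator g x + δ * g x := by
    intro x
    have hgx : 0 ≤ g x := hg0 x
    by_cases hx : x ∈ Iio (a + c)
    · rw [indicator_of_mem hx]
      nlinarith [hw1 (x - a)]
    · rw [indicator_of_notMem hx]
      nlinarith [hwδ (x - a) (by rw [mem_Iio] at hx; linarith), hw0 (x - a)]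
  calc ∫ x, g x * w (x - a)
      ≤ ∫ x, (Iio (a + c)).indicator g x + δ * g x :=
        integral_mono hgw ((hg.indicator measurableSet_Iio).add (hg.const_mul δ)) hpt
    _ = (∫ x in Iio (a + c), g x) + δ * ∫ x, g x := by
        rw [integral_add (hg.indicator measurableSet_Iio) (hg.const_mul δ),
          integral_indicator measurableSet_Iio, integral_const_mul]

theorem tendsto_integral_mul_shift_zero {ι : Type*} {l : Filter ι} {g : ι → ℝ → ℝ}
    {w : ℝ → ℝ} {m a : ι → ℝ} {M : ℝ}
    (hg : ∀ᶠ i in l, Integrable (g i)) (hg0 : ∀ i, 0 ≤ g i)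
    (hM : ∀ᶠ i in l, ∫ x, g i x ≤ M)
    (htight : ∀ ε > 0, ∃ R, ∀ᶠ i in l, ∫ x in Iio (m i - R), g i x ≤ ε)
    (hw : Measurable w) (hw0 : 0 ≤ w) (hw1 : ∀ x, w x ≤ 1)
    (hwlim : Tendsto w atTop (nhds 0)) (ha : Tendsto (fun i => a i - m i) l atBot) :
    Tendsto (fun i => ∫ x, g i x * w (x - a i)) l (nhds 0) := by
  refine tendsto_order.2 ⟨fun b hb => .of_forall fun i => hb.trans_le
    (integral_nonneg fun x => mul_nonneg (hg0 i x) (hw0 _)), fun ε hε => ?_⟩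
  obtain ⟨R, hR⟩ := htight (ε / 2) (by positivity)
  obtain ⟨δ, hδ, hδM⟩ : ∃ δ > 0, δ * M < ε / 2 := by
    refine ⟨ε / (2 * (|M| + 1)), by positivity, ?_⟩
    rw [div_mul_eq_mul_div, div_lt_div_iff₀ (by positivity) two_pos]
    nlinarith [le_abs_self M]
  obtain ⟨c, hc⟩ := eventually_atTop.mp (hwlim.eventually (ge_mem_nhds hδ))
  filter_upwards [hg, hM, hR, ha.eventually (eventually_le_atBot (-R - c))]
    with i hgi hMi hRi hai
  have htail : ∫ x in Iio (a i + c), g i x ≤ ε / 2 :=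
    (setIntegral_mono_set hgi.integrableOn (.of_forall fun x => hg0 i x)
      (.of_forall fun x (hx : x < a i + c) => show x < m i - R by linarith)).trans hRi
  calc ∫ x, g i x * w (x - a i)
      ≤ (∫ x in Iio (a i + c), g i x) + δ * ∫ x, g i x :=
        integral_mul_shift_le hgi (hg0 i) hw hw0 hw1 hc
    _ ≤ ε / 2 + δ * M := by gcongr
    _ < ε := by linarith

end

theorem localized_mass_tendsto_zero
    (T : ℝ) (u : ℝ → ℝ → ℝ)
    (hL2 : ∀ t ≥ T, MemLp (u t) 2 volume)
    (hbdd : ∃ M : ℝ, ∀ t ≥ T, (∫ x : ℝ, (u t x) ^ 2) ≤ M)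
    (m mt : ℝ → ℝ)
    (hsandwich : ∀ t ≥ T, m t ≤ mt t ∧ mt t ≤ m t + 1)
    (hnondisp : ∀ ε > 0, ∃ R > 0, ∀ t ≥ T,
      ∫ x in Set.Iio (m t - R), (u t x) ^ 2 ≤ ε)
    (f : ℝ → ℝ) (hf : ∃ A B : ℝ, 0 < A ∧ ∀ t : ℝ, f t = A * t + B)
    (κ : ℝ) (hκ : 0 < κ) (φ : ℝ → ℝ)
    (hφ : ∀ x : ℝ, φ x = 1 / 2 - (1 / Real.pi) * Real.arctan (Real.exp (κ * x))) :
    ∀ x₀ : ℝ, ∀ t₀ ≥ T,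
      Filter.Tendsto
        (fun t => ∫ x : ℝ, (u t (x + mt t)) ^ 2 * φ (x - x₀ + f t - f t₀))
        Filter.atTop (nhds 0) := by
  intro x₀ t₀ _
  obtain ⟨M, hM⟩ := hbdd
  obtain ⟨A, B, hA, hAB⟩ := hf
  obtain rfl : f = fun t => A * t + B := funext hAB
  obtain rfl : φ = arctanExpProfile κ := funext hφ
  have hshift : ∀ t,
      ∫ x, (u t (x + mt t)) ^ 2 * arctanExpProfile κ (x - x₀ + (A * t + B) - (A * t₀ + B))
        = ∫ x, (u t x) ^ 2 * arctanExpProfile κ (x - (mt t + x₀ - A * t + A * t₀)) := fun t => by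
    rw [← integral_add_right_eq_self
      (fun x => (u t x) ^ 2 * arctanExpProfile κ (x - (mt t + x₀ - A * t + A * t₀))) (mt t)]
    congr 1 with x
    ring_nf
  have hgap : Tendsto (fun t => mt t + x₀ - A * t + A * t₀ - m t) atTop atBot := by
    refine tendsto_atBot_mono' _ ?_ (tendsto_atBot_add_const_right _ (1 + x₀ + A * t₀)
      (tendsto_neg_atTop_atBot.comp (tendsto_id.const_mul_atTop hA)))
    filter_upwards [eventually_ge_atTop T] with t ht
    have := (hsandwich t ht).2
    simp only [Function.comp_apply, id]
    linarith
  simp_rw [hshift]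
  refine tendsto_integral_mul_shift_zero (g := fun t x => (u t x) ^ 2)
    ((eventually_ge_atTop T).mono fun t ht => (hL2 t ht).integrable_sq) (fun t x => sq_nonneg _)
    ((eventually_ge_atTop T).mono hM) (fun ε hε => ?_)
    (continuous_arctanExpProfile κ).measurable (arctanExpProfile_nonneg κ)
    (arctanExpProfile_le_one κ) (tendsto_arctanExpProfile_atTop hκ) hgap
  obtain ⟨R, -, hR⟩ := hnondisp ε hε
  exact ⟨R, (eventually_ge_atTop T).mono hR⟩
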